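/- Let G, H be additive commutative groups, ψ : G →+ H a surjective group homomorphism with FINITE kernel, R a commutative ring with G-grading 𝒜, and M, N G-graded R-modules with gradings ℳ, 𝒩. Let f : M →ₗ[R] N be an R-linear map, and suppose there is a finite subset S ⊆ H such that for every h ∈ H, f maps ⨆_{g ∈ ψ⁻¹(h)} ℳ g into ∑_{l ∈ S} ⨆_{k ∈ ψ⁻¹(h+l)} 𝒩 k. Then there is a finite subset T ⊆ G such that for every g ∈ G, f maps ℳ g into ∑_{t ∈ T} 𝒩 (g + t). -/

import Mathlib

/-!
A homogeneous element of degree `g` lies in the coarse component of degree `ψ g`, so its image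
lies in the components `𝒩 k` with `ψ (k - g) ∈ S`. Since `ψ` has finite kernel, its fibres are
finite, hence so is `T = ψ ⁻¹' S`, and every such `k` has the form `g + t` with `t ∈ T`.
-/

/-- Coarsening of a grading along a surjective group homomorphism `ψ`:
the component of degree `h` is the supremum of the components of the degrees
in the fibre `ψ ⁻¹' {h}`. -/
def AddSubgroup.coarsen {G H M : Type*} [AddCommGroup G] [AddCommGroup H]
    [AddCommGroup M] (ψ : G →+ H) (ℳ : G → AddSubgroup M) (h : H) : AddSubgroup M :=
  ⨆ g ∈ ψ ⁻¹' {h}, ℳ g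

namespace MonoidHom

variable {G H : Type*} [Group G] [Group H] (ψ : G →* H)

@[to_additive]
theorem finite_preimage_singleton (hker : (ψ.ker : Set G).Finite) (b : H) :
    (ψ ⁻¹' {b}).Finite := by
  rcases (ψ ⁻¹' {b}).eq_empty_or_nonempty with h | ⟨a, ha⟩
  · simp [h]
  · refine (hker.image (a * ·)).subset fun k hk => ⟨a⁻¹ * k, ?_, mul_inv_cancel_left a k⟩
    simp_all [mem_ker]

@[to_additive]
theorem finite_preimage (hker : (ψ.ker : Set G).Finite) {s : Set H} (hs : s.Finite) :
    (ψ ⁻¹' s).Finite :=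
  hs.preimage' fun b _ => ψ.finite_preimage_singleton hker b

end MonoidHom

namespace AddSubgroup

variable {G H M : Type*} [AddCommGroup G] [AddCommGroup H] [AddCommGroup M]
  (ψ : G →+ H) (ℳ : G → AddSubgroup M)

theorem le_coarsen (g : G) : ℳ g ≤ coarsen ψ ℳ (ψ g) :=
  le_iSup₂ (f := fun g' (_ : g' ∈ ψ ⁻¹' {ψ g}) => ℳ g') g rfl

theorem coarsen_add_eq (g : G) (l : H) :
    coarsen ψ ℳ (ψ g + l) = ⨆ t ∈ ψ ⁻¹' {l}, ℳ (g + t) := by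
  refine le_antisymm (iSup₂_le fun k hk => ?_) (iSup₂_le fun t ht => ?_)
  · refine le_iSup₂_of_le (k - g) ?_ (by rw [add_sub_cancel])
    simp_all [map_sub]
  · exact le_iSup₂_of_le (g + t) (by simp_all) le_rfl

theorem iSup_coarsen_add_le {S : Set H} {T : Set G} (hST : ψ ⁻¹' S ⊆ T) (g : G) :
    ⨆ l ∈ S, coarsen ψ ℳ (ψ g + l) ≤ ⨆ t ∈ T, ℳ (g + t) := by
  simp_rw [coarsen_add_eq]
  exact iSup₂_le fun l hl => iSup₂_le fun t ht => le_iSup₂_of_le t (hST (by simp_all)) le_rfl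

end AddSubgroup

theorem exists_finite_degree_set_of_coarsened_general {G H R M N : Type*}
    [AddCommGroup G] [AddCommGroup H] [CommRing R]
    [AddCommGroup M] [Module R M] [AddCommGroup N] [Module R N]
    (ψ : G →+ H) (hker : (ψ.ker : Set G).Finite)
    (ℳ : G → AddSubgroup M) (𝒩 : G → AddSubgroup N)
    (f : M →ₗ[R] N) (S : Finset H)
    (hf : ∀ h : H, ∀ x ∈ AddSubgroup.coarsen ψ ℳ h,
      f x ∈ ⨆ l ∈ S, AddSubgroup.coarsen ψ 𝒩 (h + l)) :
    ∃ T : Finset G, ∀ g : G, ∀ x ∈ ℳ g, f x ∈ ⨆ t ∈ T, 𝒩 (g + t) := by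
  have hT := ψ.finite_preimage hker S.finite_toSet
  refine ⟨hT.toFinset, fun g x hx => ?_⟩
  have hle := AddSubgroup.iSup_coarsen_add_le ψ 𝒩 (S := S) hT.coe_toFinset.ge g
  exact hle (hf (ψ g) x (AddSubgroup.le_coarsen ψ ℳ g hx))

/-- If `ψ : G →+ H` is surjective with finite kernel, `M`, `N` are `G`-graded `R`-modules,
and the `R`-linear map `f : M → N` satisfies, for some finite `S ⊆ H`,
`f(ℳ_[ψ] h) ⊆ ∑_{l ∈ S} 𝒩_[ψ] (h + l)` for all `h ∈ H`, then there is a finite `T ⊆ G`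
with `f(ℳ g) ⊆ ∑_{t ∈ T} 𝒩 (g + t)` for all `g ∈ G`. -/
theorem exists_finite_degree_set_of_coarsened {G H R M N : Type*}
    [AddCommGroup G] [AddCommGroup H] [DecidableEq G] [DecidableEq H] [CommRing R]
    [AddCommGroup M] [Module R M] [AddCommGroup N] [Module R N]
    (ψ : G →+ H) (hψ : Function.Surjective ψ) (hker : (ψ.ker : Set G).Finite)
    (𝒜 : G → AddSubgroup R) [GradedRing 𝒜]
    (ℳ : G → AddSubgroup M) (𝒩 : G → AddSubgroup N)
    (hM : DirectSum.IsInternal ℳ)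
    (hMsmul : ∀ g g' : G, ∀ r ∈ 𝒜 g, ∀ m ∈ ℳ g', r • m ∈ ℳ (g + g'))
    (hN : DirectSum.IsInternal 𝒩)
    (hNsmul : ∀ g g' : G, ∀ r ∈ 𝒜 g, ∀ n ∈ 𝒩 g', r • n ∈ 𝒩 (g + g'))
    (f : M →ₗ[R] N) (S : Finset H)
    (hf : ∀ h : H, ∀ x ∈ AddSubgroup.coarsen ψ ℳ h,
      f x ∈ ⨆ l ∈ S, AddSubgroup.coarsen ψ 𝒩 (h + l)) :
    ∃ T : Finset G, ∀ g : G, ∀ x ∈ ℳ g, f x ∈ ⨆ t ∈ T, 𝒩 (g + t) :=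
  exists_finite_degree_set_of_coarsened_general ψ hker ℳ 𝒩 f S hf
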